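/- arXiv:1201.6272 — 14 statements merged into one kernel-verified Lean document; each statement's English description precedes it below -/
import Mathlib

section
/- Let C be a cartesian category satisfying axiom (G). For any parallel morphisms f, g : A ⟶ B, if f ∘ x = g ∘ x for every element x of A, then f = g (equivalently, the terminal object 1 is a separator for C). -/
open CategoryTheory CategoryTheory.Limits

namespace CETCS

universe v u

variable {C : Type u} [Category.{v} C] [HasTerminal C]

/-- A morphism is onto if every (global) element of the codomain is hit. -/
def Onto {A B : C} (f : A ⟶ B) : Prop :=
  ∀ y : ⊤_ C ⟶ B, ∃ x : ⊤_ C ⟶ A, x ≫ f = y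

/-- Membership `x ∈ m` of an element in (the subobject given by) a morphism. -/
def Mem {M X : C} (m : M ⟶ X) (x : ⊤_ C ⟶ X) : Prop :=
  ∃ a : ⊤_ C ⟶ M, a ≫ m = x

/-- Membership `(x, y) ∈ (r₁, r₂)` for a binary relation. -/
def Mem2 {R X Y : C} (r₁ : R ⟶ X) (r₂ : R ⟶ Y) (x : ⊤_ C ⟶ X) (y : ⊤_ C ⟶ Y) : Prop :=
  ∃ a : ⊤_ C ⟶ R, a ≫ r₁ = x ∧ a ≫ r₂ = y

/-- Membership `(x, y, z) ∈ (r₁, r₂, r₃)` for a ternary relation. -/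
def Mem3 {R X Y Z : C} (r₁ : R ⟶ X) (r₂ : R ⟶ Y) (r₃ : R ⟶ Z)
    (x : ⊤_ C ⟶ X) (y : ⊤_ C ⟶ Y) (z : ⊤_ C ⟶ Z) : Prop :=
  ∃ a : ⊤_ C ⟶ R, a ≫ r₁ = x ∧ a ≫ r₂ = y ∧ a ≫ r₃ = z

/-- Axiom (G): every morphism that is both mono and onto is an isomorphism. -/
def AxiomG (C : Type u) [Category.{v} C] [HasTerminal C] : Prop :=
  ∀ {A B : C} (f : A ⟶ B), Mono f → Onto f → IsIso f

/-- A pair of morphisms with common domain is jointly monic. -/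
def JointlyMonic2 {R X Y : C} (r₁ : R ⟶ X) (r₂ : R ⟶ Y) : Prop :=
  ∀ {U : C} (f g : U ⟶ R), f ≫ r₁ = g ≫ r₁ → f ≫ r₂ = g ≫ r₂ → f = g

/-- A triple of morphisms with common domain is jointly monic. -/
def JointlyMonic3 {R X Y Z : C} (r₁ : R ⟶ X) (r₂ : R ⟶ Y) (r₃ : R ⟶ Z) : Prop :=
  ∀ {U : C} (f g : U ⟶ R), f ≫ r₁ = g ≫ r₁ → f ≫ r₂ = g ≫ r₂ → f ≫ r₃ = g ≫ r₃ → f = g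

/-- Axiom (Fct): every morphism factors as an onto morphism followed by a mono. -/
def AxiomFct (C : Type u) [Category.{v} C] [HasTerminal C] : Prop :=
  ∀ {A B : C} (f : A ⟶ B), ∃ (I : C) (e : A ⟶ I) (i : I ⟶ B), Onto e ∧ Mono i ∧ e ≫ i = f

/-- A morphism is a cover if any mono through which it factors is an isomorphism. -/
def IsCover {A B : C} (f : A ⟶ B) : Prop :=
  ∀ {I : C} (g : A ⟶ I) (m : I ⟶ B), Mono m → g ≫ m = f → IsIso m

/-- A choice object: every onto morphism into it has a section. -/
def ChoiceObject (P : C) : Prop :=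
  ∀ {A : C} (f : A ⟶ P), Onto f → ∃ g : P ⟶ A, g ≫ f = 𝟙 P

/-- Axiom (PA): every object is covered by a choice object. -/
def AxiomPA (C : Type u) [Category.{v} C] [HasTerminal C] : Prop :=
  ∀ A : C, ∃ (P : C) (p : P ⟶ A), ChoiceObject P ∧ Onto p

/-- Axiom (Π): universal dependent products exist. -/
def AxiomPi (C : Type u) [Category.{v} C] [HasTerminal C] : Prop :=
  ∀ {Y X I : C} (g : Y ⟶ X) (f : X ⟶ I),
    ∃ (P F : C) (ev : P ⟶ Y) (π₁ : P ⟶ F) (π₂ : P ⟶ X) (φ : F ⟶ I),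
      ev ≫ g = π₂ ∧ IsPullback π₂ π₁ f φ ∧
      ∀ (i : ⊤_ C ⟶ I) {R : C} (r₁ : R ⟶ X) (r₂ : R ⟶ Y), Mono r₁ →
        (∀ (x : ⊤_ C ⟶ X) (y : ⊤_ C ⟶ Y), Mem2 r₁ r₂ x y → y ≫ g = x ∧ x ≫ f = i) →
        (∀ x : ⊤_ C ⟶ X, x ≫ f = i → ∃ y : ⊤_ C ⟶ Y, Mem2 r₁ r₂ x y) →
        ∃! s : ⊤_ C ⟶ F, s ≫ φ = i ∧
          ∀ (x : ⊤_ C ⟶ X) (y : ⊤_ C ⟶ Y), Mem3 π₁ π₂ ev s x y ↔ Mem2 r₁ r₂ x y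

/-- `i, j` form a binary coproduct (sum) diagram. -/
def IsCoproductDiagram {A B S : C} (i : A ⟶ S) (j : B ⟶ S) : Prop :=
  ∀ {T : C} (f : A ⟶ T) (g : B ⟶ T), ∃! h : S ⟶ T, i ≫ h = f ∧ j ≫ h = g

/-- Axiom (DP): each element of a sum is a member of one of its injections. -/
def AxiomDP (C : Type u) [Category.{v} C] [HasTerminal C] : Prop :=
  ∀ {A B S : C} (i : A ⟶ S) (j : B ⟶ S), IsCoproductDiagram i j →
    ∀ z : ⊤_ C ⟶ S, Mem i z ∨ Mem j z

/-- An equivalence relation: jointly monic and reflexive, symmetric, transitive on elements. -/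
def EquivRelation {R X : C} (r₁ r₂ : R ⟶ X) : Prop :=
  JointlyMonic2 r₁ r₂ ∧
  (∀ x : ⊤_ C ⟶ X, Mem2 r₁ r₂ x x) ∧
  (∀ x y : ⊤_ C ⟶ X, Mem2 r₁ r₂ x y → Mem2 r₁ r₂ y x) ∧
  (∀ x y z : ⊤_ C ⟶ X, Mem2 r₁ r₂ x y → Mem2 r₁ r₂ y z → Mem2 r₁ r₂ x z)

/-- Axiom (Eff): all equivalence relations are effective. -/
def AxiomEff (C : Type u) [Category.{v} C] [HasTerminal C] : Prop :=
  ∀ {R X : C} (r₁ r₂ : R ⟶ X), EquivRelation r₁ r₂ →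
    ∃ (E : C) (e : X ⟶ E), ∀ x₁ x₂ : ⊤_ C ⟶ X, Mem2 r₁ r₂ x₁ x₂ ↔ x₁ ≫ e = x₂ ≫ e

/-- `z : 1 ⟶ N`, `S : N ⟶ N` form a natural numbers object. -/
def IsNNO {N : C} (z : ⊤_ C ⟶ N) (S : N ⟶ N) : Prop :=
  ∀ {A : C} (b : ⊤_ C ⟶ A) (h : A ⟶ A), ∃! f : N ⟶ A, z ≫ f = b ∧ S ≫ f = f ≫ h

/-- A Π-diagram for `g : Y ⟶ X`, `f : X ⟶ I`. -/
def IsPiDiagram {Y X I P F : C} (g : Y ⟶ X) (f : X ⟶ I)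
    (ev : P ⟶ Y) (π₁ : P ⟶ F) (π₂ : P ⟶ X) (φ : F ⟶ I) : Prop :=
  ev ≫ g = π₂ ∧ IsPullback π₂ π₁ f φ

/-- A universal Π-diagram for `g : Y ⟶ X`, `f : X ⟶ I`. -/
def IsUniversalPiDiagram {Y X I P F : C} (g : Y ⟶ X) (f : X ⟶ I)
    (ev : P ⟶ Y) (π₁ : P ⟶ F) (π₂ : P ⟶ X) (φ : F ⟶ I) : Prop :=
  ∀ {P' F' : C} (ev' : P' ⟶ Y) (π₁' : P' ⟶ F') (π₂' : P' ⟶ X) (φ' : F' ⟶ I),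
    IsPiDiagram g f ev' π₁' π₂' φ' →
    ∃! n : F' ⟶ F, φ' = n ≫ φ ∧
      ∀ m : P' ⟶ P, m ≫ π₁ = π₁' ≫ n → m ≫ π₂ = π₂' → m ≫ ev = ev'

/-- Every morphism factors as a cover followed by a mono. -/
def HasCoverMonoFactorizations (C : Type u) [Category.{v} C] [HasTerminal C] : Prop :=
  ∀ {A B : C} (f : A ⟶ B), ∃ (I : C) (e : A ⟶ I) (m : I ⟶ B), IsCover e ∧ Mono m ∧ e ≫ m = f

/-- Covers are stable under pullback. -/
def CoversPullbackStable (C : Type u) [Category.{v} C] [HasTerminal C] : Prop :=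
  ∀ {P A B Z : C} (p : P ⟶ A) (q : P ⟶ B) (f : A ⟶ Z) (g : B ⟶ Z),
    IsPullback p q f g → IsCover f → IsCover q

/-- The terminal object is projective (with respect to covers). -/
def TerminalProjective (C : Type u) [Category.{v} C] [HasTerminal C] : Prop :=
  ∀ {A B : C} (e : A ⟶ B), IsCover e → ∀ h : ⊤_ C ⟶ B, ∃ k : ⊤_ C ⟶ A, k ≫ e = h

theorem onto_equalizer_ι {A B : C} {f g : A ⟶ B} [HasEqualizer f g]
    (h : ∀ x : ⊤_ C ⟶ A, x ≫ f = x ≫ g) : Onto (equalizer.ι f g) := fun x =>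
  ⟨equalizer.lift x (h x), equalizer.lift_ι x (h x)⟩

theorem eq_of_comp_eq_of_axiomG (hG : AxiomG C) {A B : C} {f g : A ⟶ B} [HasEqualizer f g]
    (h : ∀ x : ⊤_ C ⟶ A, x ≫ f = x ≫ g) : f = g :=
  have := hG (equalizer.ι f g) inferInstance (onto_equalizer_ι h)
  (cancel_epi (equalizer.ι f g)).mp (equalizer.condition f g)

theorem statement0_general {C : Type u} [Category.{v} C]
    [HasTerminal C] [HasEqualizers C]
    (hG : AxiomG C) {A B : C} (f g : A ⟶ B)
    (h : ∀ x : ⊤_ C ⟶ A, x ≫ f = x ≫ g) : f = g :=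
  eq_of_comp_eq_of_axiomG hG h

/-- If a cartesian category satisfies (G), then the terminal object is a separator:
morphisms agreeing on all elements are equal. -/
theorem statement0 {C : Type u} [Category.{v} C]
    [HasTerminal C] [HasBinaryProducts C] [HasEqualizers C]
    (hG : AxiomG C) {A B : C} (f g : A ⟶ B)
    (h : ∀ x : ⊤_ C ⟶ A, x ≫ f = x ≫ g) : f = g :=
  statement0_general hG f g h

end CETCS
end

section
/- Let C be a cartesian category satisfying axiom (G). A morphism f : A ⟶ B is a monomorphism if and only if for all elements x, y of A, f ∘ x = f ∘ y implies x = y. -/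
/-!
If `f` is injective on elements, its diagonal `A ⟶ A ×_B A` is onto: an element of the kernel
pair is a pair `(x, y)` with `x ≫ f = y ≫ f`, so `x = y` and it comes from `x`. The diagonal is
always split mono, so by (G) it is an isomorphism, which says exactly that `f` is mono.
-/

open CategoryTheory CategoryTheory.Limits

namespace CETCS

universe v u

variable {C : Type u} [Category.{v} C] [HasTerminal C]

theorem onto_diagonal_of_injective_on_elements {A B : C} (f : A ⟶ B) [HasPullback f f]
    (hf : ∀ x y : ⊤_ C ⟶ A, x ≫ f = y ≫ f → x = y) : Onto (pullback.diagonal f) := by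
  intro k
  refine ⟨k ≫ pullback.fst f f, ?_⟩
  have hfst_eq_snd : k ≫ pullback.fst f f = k ≫ pullback.snd f f :=
    hf _ _ (by simp only [Category.assoc, pullback.condition])
  apply pullback.hom_ext <;> simp [hfst_eq_snd]

theorem mono_of_injective_on_elements (hG : AxiomG C) {A B : C} (f : A ⟶ B) [HasPullback f f]
    (hf : ∀ x y : ⊤_ C ⟶ A, x ≫ f = y ≫ f → x = y) : Mono f :=
  (pullback.isIso_diagonal_iff f).mp
    (hG _ inferInstance (onto_diagonal_of_injective_on_elements f hf))

/-- In a cartesian category satisfying (G), a morphism is mono iff it is injective on elements. -/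
theorem statement1 {C : Type u} [Category.{v} C]
    [HasTerminal C] [HasBinaryProducts C] [HasEqualizers C]
    (hG : AxiomG C) {A B : C} (f : A ⟶ B) :
    Mono f ↔ ∀ x y : ⊤_ C ⟶ A, x ≫ f = y ≫ f → x = y := by
  have := hasPullbacks_of_hasBinaryProducts_of_hasEqualizers C
  exact ⟨fun _ x y hxy ↦ (cancel_mono f).mp hxy, mono_of_injective_on_elements hG f⟩

end CETCS
end

section
/- Let C be a cartesian category satisfying axiom (G). For all monomorphisms m : M ⟶ X and n : N ⟶ X, the following are equivalent: (i) for every element x of X, x ∈ m implies x ∈ n; (ii) there exists a morphism f : M ⟶ N with m = n ∘ f. -/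
open CategoryTheory CategoryTheory.Limits

namespace CETCS

universe v u

variable {C : Type u} [Category.{v} C] [HasTerminal C]

theorem mem_of_factors {M N X : C} {m : M ⟶ X} {n : N ⟶ X} {f : M ⟶ N} (hf : m = f ≫ n)
    {x : ⊤_ C ⟶ X} : Mem m x → Mem n x := by
  rintro ⟨a, rfl⟩
  exact ⟨a ≫ f, by rw [hf, Category.assoc]⟩

theorem onto_pullback_fst_of_mem {M N X : C} {m : M ⟶ X} {n : N ⟶ X} [HasPullback m n]
    (h : ∀ x : ⊤_ C ⟶ X, Mem m x → Mem n x) : Onto (pullback.fst m n) := by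
  intro a
  obtain ⟨b, hb⟩ := h (a ≫ m) ⟨a, rfl⟩
  exact ⟨pullback.lift a b hb.symm, pullback.lift_fst _ _ _⟩

/-- The pullback of `n` along `m` is mono, and onto by elementwise inclusion, so by (G) it is an
isomorphism through which `m` factors. -/
theorem factors_of_mem (hG : AxiomG C) {M N X : C} {m : M ⟶ X} {n : N ⟶ X} [HasPullback m n]
    [Mono n] (h : ∀ x : ⊤_ C ⟶ X, Mem m x → Mem n x) : ∃ f : M ⟶ N, m = f ≫ n := by
  have := hG _ inferInstance (onto_pullback_fst_of_mem h)
  refine ⟨inv (pullback.fst m n) ≫ pullback.snd m n, ?_⟩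
  rw [Category.assoc, ← pullback.condition, IsIso.inv_hom_id_assoc]

theorem statement2_general {C : Type u} [Category.{v} C]
    [HasTerminal C] [HasBinaryProducts C] [HasEqualizers C]
    (hG : AxiomG C) {M N X : C} (m : M ⟶ X) (n : N ⟶ X) (hn : Mono n) :
    (∀ x : ⊤_ C ⟶ X, Mem m x → Mem n x) ↔ ∃ f : M ⟶ N, m = f ≫ n := by
  have := hasPullbacks_of_hasBinaryProducts_of_hasEqualizers C
  refine ⟨factors_of_mem hG, ?_⟩
  rintro ⟨f, hf⟩ x
  exact mem_of_factors hf

/-- In a cartesian category satisfying (G), elementwise inclusion of monos coincides with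
factorization inclusion. -/
theorem statement2 {C : Type u} [Category.{v} C]
    [HasTerminal C] [HasBinaryProducts C] [HasEqualizers C]
    (hG : AxiomG C) {M N X : C} (m : M ⟶ X) (n : N ⟶ X) (hm : Mono m) (hn : Mono n) :
    (∀ x : ⊤_ C ⟶ X, Mem m x → Mem n x) ↔ ∃ f : M ⟶ N, m = f ≫ n :=
  statement2_general hG m n hn

end CETCS
end

section
/- Let C be a cartesian category satisfying axiom (G), and let r₁ : R ⟶ X, r₂ : R ⟶ Y be a jointly monic pair of morphisms (a binary relation between X and Y). Then r₁ is a monomorphism (i.e., the relation is a partial function) if and only if for all elements x of X and y, z of Y, (x,y) ∈ (r₁,r₂) and (x,z) ∈ (r₁,r₂) imply y = z. -/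
/-!
By (G), `C` is well-pointed: the equalizer of two morphisms that agree on all elements is
mono and onto, hence an isomorphism, so the two morphisms are equal. Given `f ≫ r₁ = g ≫ r₁`,
single-valuedness makes `f ≫ r₂` and `g ≫ r₂` agree on elements, and joint monicity gives `f = g`.
-/

open CategoryTheory CategoryTheory.Limits

namespace CETCS

universe v u

variable {C : Type u} [Category.{v} C] [HasTerminal C]

def SingleValued {R X Y : C} (r₁ : R ⟶ X) (r₂ : R ⟶ Y) : Prop :=
  ∀ (x : ⊤_ C ⟶ X) (y z : ⊤_ C ⟶ Y), Mem2 r₁ r₂ x y → Mem2 r₁ r₂ x z → y = z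

theorem singleValued_of_mono {R X Y : C} (r₁ : R ⟶ X) [Mono r₁] (r₂ : R ⟶ Y) :
    SingleValued r₁ r₂ := by
  rintro x y z ⟨a, rfl, rfl⟩ ⟨b, hb, rfl⟩
  rw [(cancel_mono r₁).mp hb]

theorem AxiomG.hom_ext (hG : AxiomG C) {A B : C} {f g : A ⟶ B} [HasEqualizer f g]
    (h : ∀ u : ⊤_ C ⟶ A, u ≫ f = u ≫ g) : f = g := by
  have : IsIso (equalizer.ι f g) :=
    hG _ inferInstance fun u => ⟨equalizer.lift u (h u), equalizer.lift_ι u (h u)⟩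
  exact (cancel_epi (equalizer.ι f g)).mp (equalizer.condition f g)

theorem mono_of_singleValued [HasEqualizers C] (hG : AxiomG C) {R X Y : C} {r₁ : R ⟶ X}
    {r₂ : R ⟶ Y} (hjm : JointlyMonic2 r₁ r₂) (hsv : SingleValued r₁ r₂) : Mono r₁ := by
  refine ⟨fun f g hfg => hjm f g hfg (hG.hom_ext fun u => ?_)⟩
  simpa using hsv (u ≫ f ≫ r₁) _ _ ⟨u ≫ f, Category.assoc .., rfl⟩
    ⟨u ≫ g, by simp [hfg], rfl⟩

theorem statement3_general {C : Type u} [Category.{v} C]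
    [HasTerminal C] [HasEqualizers C]
    (hG : AxiomG C) {R X Y : C} (r₁ : R ⟶ X) (r₂ : R ⟶ Y) (hjm : JointlyMonic2 r₁ r₂) :
    Mono r₁ ↔ ∀ (x : ⊤_ C ⟶ X) (y z : ⊤_ C ⟶ Y),
      Mem2 r₁ r₂ x y → Mem2 r₁ r₂ x z → y = z :=
  ⟨fun _ => singleValued_of_mono r₁ r₂, mono_of_singleValued hG hjm⟩

/-- In a cartesian category satisfying (G), a binary relation is a partial function iff
it is single-valued on elements. -/
theorem statement3 {C : Type u} [Category.{v} C]
    [HasTerminal C] [HasBinaryProducts C] [HasEqualizers C]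
    (hG : AxiomG C) {R X Y : C} (r₁ : R ⟶ X) (r₂ : R ⟶ Y) (hjm : JointlyMonic2 r₁ r₂) :
    Mono r₁ ↔ ∀ (x : ⊤_ C ⟶ X) (y z : ⊤_ C ⟶ Y),
      Mem2 r₁ r₂ x y → Mem2 r₁ r₂ x z → y = z :=
  statement3_general hG r₁ r₂ hjm

end CETCS
end

section
/- Let C be a cartesian category satisfying axiom (G), and let r₁ : R ⟶ X, r₂ : R ⟶ Y be a jointly monic pair of morphisms (a binary relation between X and Y). Then r₁ is an isomorphism (i.e., the relation is a total function) if and only if for every element x of X there exists a unique element y of Y with (x,y) ∈ (r₁,r₂). -/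
open CategoryTheory CategoryTheory.Limits

namespace CETCS

universe v u

variable {C : Type u} [Category.{v} C] [HasTerminal C]

/-!
Under (G), a morphism `f : A ⟶ B` that is injective on elements is mono: its diagonal
`A ⟶ A ×_B A` is a split mono hit by every element, hence an isomorphism, which makes `f` mono. For the relation, uniqueness of the related `y` together with joint monicity makes
`r₁` injective on elements, and existence makes it onto, so (G) applies to `r₁` itself.
-/

section

variable {A B : C}

theorem onto_diagonal_of_injective (f : A ⟶ B) [HasPullback f f]
    (hf : ∀ a b : ⊤_ C ⟶ A, a ≫ f = b ≫ f → a = b) : Onto (pullback.diagonal f) := by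
  intro k
  have hk : k ≫ pullback.fst f f = k ≫ pullback.snd f f :=
    hf _ _ (by simp [pullback.condition])
  exact ⟨k ≫ pullback.fst f f, pullback.hom_ext (by simp) (by simp [hk])⟩

theorem AxiomG.mono_of_injective (hG : AxiomG C) (f : A ⟶ B) [HasPullback f f]
    (hf : ∀ a b : ⊤_ C ⟶ A, a ≫ f = b ≫ f → a = b) : Mono f :=
  (pullback.isIso_diagonal_iff f).mp
    (hG _ inferInstance (onto_diagonal_of_injective f hf))

end

section

variable {R X Y : C} {r₁ : R ⟶ X} {r₂ : R ⟶ Y}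

theorem existsUnique_mem2_of_isIso [IsIso r₁] (x : ⊤_ C ⟶ X) :
    ∃! y : ⊤_ C ⟶ Y, Mem2 r₁ r₂ x y := by
  refine ⟨x ≫ inv r₁ ≫ r₂, ⟨x ≫ inv r₁, by simp, Category.assoc _ _ _⟩, ?_⟩
  rintro _ ⟨a, rfl, rfl⟩
  simp

theorem onto_of_forall_exists_mem2 (h : ∀ x : ⊤_ C ⟶ X, ∃ y : ⊤_ C ⟶ Y, Mem2 r₁ r₂ x y) :
    Onto r₁ := fun x ↦
  let ⟨_, a, ha, _⟩ := h x
  ⟨a, ha⟩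

theorem JointlyMonic2.injective_of_functional (hjm : JointlyMonic2 r₁ r₂)
    (h : ∀ x y y', Mem2 r₁ r₂ x y → Mem2 r₁ r₂ x y' → y = y')
    (a b : ⊤_ C ⟶ R) (hab : a ≫ r₁ = b ≫ r₁) : a = b :=
  hjm a b hab (h _ _ _ ⟨a, rfl, rfl⟩ ⟨b, hab.symm, rfl⟩)

end

/-- In a cartesian category satisfying (G), a binary relation is a total function iff
every element of the domain is related to a unique element of the codomain. -/
theorem statement4 {C : Type u} [Category.{v} C]
    [HasTerminal C] [HasBinaryProducts C] [HasEqualizers C]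
    (hG : AxiomG C) {R X Y : C} (r₁ : R ⟶ X) (r₂ : R ⟶ Y) (hjm : JointlyMonic2 r₁ r₂) :
    IsIso r₁ ↔ ∀ x : ⊤_ C ⟶ X, ∃! y : ⊤_ C ⟶ Y, Mem2 r₁ r₂ x y := by
  refine ⟨fun _ ↦ existsUnique_mem2_of_isIso, fun h ↦ ?_⟩
  have := hasPullbacks_of_hasBinaryProducts_of_hasEqualizers C
  have hinj := hjm.injective_of_functional fun x _ _ hy hy' ↦ (h x).unique hy hy'
  exact hG r₁ (hG.mono_of_injective r₁ hinj)
    (onto_of_forall_exists_mem2 fun x ↦ (h x).exists)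

end CETCS
end

section
/- (Unique Choice) Let C be a cartesian category satisfying axiom (G), and let r₁ : R ⟶ X, r₂ : R ⟶ Y be a jointly monic pair of morphisms (a binary relation between X and Y). If for every element x of X there exists a unique element y of Y with (x,y) ∈ (r₁,r₂), then there exists a morphism f : X ⟶ Y such that (x, f ∘ x) ∈ (r₁,r₂) for every element x of X. -/
/-!
Under (G) global elements separate morphisms: the equalizer of two morphisms that agree on
all elements is mono and onto, hence an isomorphism. Uniqueness of the related element then
makes `r₁` mono, since two morphisms `U ⟶ R` agreeing after `r₁` agree after `r₂` on every
element of `U`, hence agree after `r₂`, hence are equal by joint monicity. Existence makes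
`r₁` onto, so `r₁` is an isomorphism by (G) and `f := r₁⁻¹ ≫ r₂` tracks the relation.
-/

open CategoryTheory CategoryTheory.Limits

namespace CETCS

universe v u

variable {C : Type u} [Category.{v} C] [HasTerminal C]

theorem AxiomG.ext_of_elements [HasEqualizers C] (hG : AxiomG C) {A B : C} {f g : A ⟶ B}
    (h : ∀ a : ⊤_ C ⟶ A, a ≫ f = a ≫ g) : f = g := by
  have : IsIso (equalizer.ι f g) :=
    hG _ inferInstance fun a => ⟨equalizer.lift a (h a), equalizer.lift_ι a (h a)⟩
  exact (cancel_epi (equalizer.ι f g)).mp (equalizer.condition f g)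

theorem AxiomG.mono_fst_of_functional [HasEqualizers C] (hG : AxiomG C) {R X Y : C}
    {r₁ : R ⟶ X} {r₂ : R ⟶ Y} (hjm : JointlyMonic2 r₁ r₂)
    (hfun : ∀ x y y', Mem2 r₁ r₂ x y → Mem2 r₁ r₂ x y' → y = y') : Mono r₁ := by
  refine ⟨fun {U} f g hfg => hjm f g hfg (hG.ext_of_elements fun u => ?_)⟩
  refine hfun (u ≫ f ≫ r₁) _ _ ⟨u ≫ f, by simp, by simp⟩ ⟨u ≫ g, ?_, by simp⟩
  simp only [Category.assoc, hfg]

theorem onto_fst_of_total {R X Y : C} {r₁ : R ⟶ X} {r₂ : R ⟶ Y}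
    (htot : ∀ x, ∃ y, Mem2 r₁ r₂ x y) : Onto r₁ := fun x =>
  let ⟨_, a, ha, _⟩ := htot x
  ⟨a, ha⟩

theorem statement5_general {C : Type u} [Category.{v} C]
    [HasTerminal C] [HasEqualizers C]
    (hG : AxiomG C) {R X Y : C} (r₁ : R ⟶ X) (r₂ : R ⟶ Y) (hjm : JointlyMonic2 r₁ r₂)
    (h : ∀ x : ⊤_ C ⟶ X, ∃! y : ⊤_ C ⟶ Y, Mem2 r₁ r₂ x y) :
    ∃ f : X ⟶ Y, ∀ x : ⊤_ C ⟶ X, Mem2 r₁ r₂ x (x ≫ f) := by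
  have hmono : Mono r₁ :=
    hG.mono_fst_of_functional hjm fun x _ _ hy hy' => (h x).unique hy hy'
  have honto : Onto r₁ := onto_fst_of_total fun x => (h x).exists
  have : IsIso r₁ := hG r₁ hmono honto
  exact ⟨inv r₁ ≫ r₂, fun x => ⟨x ≫ inv r₁, by simp, by simp⟩⟩

/-- (Unique Choice) In a cartesian category satisfying (G), a relation which relates each
element to a unique element is tracked by a morphism. -/
theorem statement5 {C : Type u} [Category.{v} C]
    [HasTerminal C] [HasBinaryProducts C] [HasEqualizers C]
    (hG : AxiomG C) {R X Y : C} (r₁ : R ⟶ X) (r₂ : R ⟶ Y) (hjm : JointlyMonic2 r₁ r₂)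
    (h : ∀ x : ⊤_ C ⟶ X, ∃! y : ⊤_ C ⟶ Y, Mem2 r₁ r₂ x y) :
    ∃ f : X ⟶ Y, ∀ x : ⊤_ C ⟶ X, Mem2 r₁ r₂ x (x ≫ f) :=
  statement5_general hG r₁ r₂ hjm h

end CETCS
end

section
/- Let C be a cartesian category satisfying axiom (G). A commutative square consisting of morphisms π₁ : P ⟶ A, π₂ : P ⟶ B, f : A ⟶ C, g : B ⟶ C with f ∘ π₁ = g ∘ π₂ is a pullback square if and only if for all elements x of A and y of B with f ∘ x = g ∘ y there exists a unique element t of P with x = π₁ ∘ t and y = π₂ ∘ t. -/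
open CategoryTheory CategoryTheory.Limits

namespace CETCS

universe v u

variable {C : Type u} [Category.{v} C] [HasTerminal C]

/-! Under (G), two morphisms that agree on all elements are equal: their equalizer is mono and
onto, hence an isomorphism. So a morphism that is bijective on elements is an isomorphism, and the
elementwise condition says exactly that the comparison map from `P` to the pullback is bijective
on elements. -/

theorem _root_.CategoryTheory.IsPullback.existsUnique_lift {D : Type*} [Category D]
    {P A B Z W : D} {π₁ : P ⟶ A} {π₂ : P ⟶ B} {f : A ⟶ Z} {g : B ⟶ Z} (hp : IsPullback π₁ π₂ f g) (x : W ⟶ A) (y : W ⟶ B) (hxy : x ≫ f = y ≫ g) :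
    ∃! t : W ⟶ P, x = t ≫ π₁ ∧ y = t ≫ π₂ :=
  ⟨hp.lift x y hxy, ⟨(hp.lift_fst x y hxy).symm, (hp.lift_snd x y hxy).symm⟩,
    fun _ ⟨h₁, h₂⟩ => hp.hom_ext (by rw [← h₁, hp.lift_fst]) (by rw [← h₂, hp.lift_snd])⟩

namespace AxiomG

variable [HasEqualizers C] (hG : AxiomG C)
include hG

theorem hom_ext_of_elements {U X : C} {u v : U ⟶ X} (huv : ∀ w : ⊤_ C ⟶ U, w ≫ u = w ≫ v) :
    u = v := by
  have honto : Onto (equalizer.ι u v) := fun w =>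
    ⟨equalizer.lift w (huv w), equalizer.lift_ι _ _⟩
  have : IsIso (equalizer.ι u v) := hG _ inferInstance honto
  rw [← cancel_epi (equalizer.ι u v)]
  exact equalizer.condition u v

theorem mono_of_injective_on_elements {X Y : C} {h : X ⟶ Y}
    (hinj : ∀ s t : ⊤_ C ⟶ X, s ≫ h = t ≫ h → s = t) : Mono h :=
  ⟨fun u v huv => hG.hom_ext_of_elements fun w =>
    hinj _ _ (by rw [Category.assoc, Category.assoc, huv])⟩

theorem isIso_of_bijective_on_elements {X Y : C} {h : X ⟶ Y}
    (hinj : ∀ s t : ⊤_ C ⟶ X, s ≫ h = t ≫ h → s = t) (honto : Onto h) : IsIso h :=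
  hG h (hG.mono_of_injective_on_elements hinj) honto

theorem isPullback_of_existsUnique_lift [HasPullbacks C] {P A B Z : C} {π₁ : P ⟶ A}
    {π₂ : P ⟶ B} {f : A ⟶ Z} {g : B ⟶ Z} (comm : π₁ ≫ f = π₂ ≫ g)
    (hlift : ∀ (x : ⊤_ C ⟶ A) (y : ⊤_ C ⟶ B), x ≫ f = y ≫ g →
      ∃! t : ⊤_ C ⟶ P, x = t ≫ π₁ ∧ y = t ≫ π₂) :
    IsPullback π₁ π₂ f g := by
  let h : P ⟶ pullback f g := pullback.lift π₁ π₂ comm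
  have h_fst : h ≫ pullback.fst f g = π₁ := pullback.lift_fst _ _ comm
  have h_snd : h ≫ pullback.snd f g = π₂ := pullback.lift_snd _ _ comm
  have hinj : ∀ s t : ⊤_ C ⟶ P, s ≫ h = t ≫ h → s = t := by
    intro s t hst
    have h₁ : s ≫ π₁ = t ≫ π₁ := by simpa [h_fst] using hst =≫ pullback.fst f g
    have h₂ : s ≫ π₂ = t ≫ π₂ := by simpa [h_snd] using hst =≫ pullback.snd f g
    have hs : (s ≫ π₁) ≫ f = (s ≫ π₂) ≫ g := by rw [Category.assoc, Category.assoc, comm]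
    exact (hlift _ _ hs).unique ⟨rfl, rfl⟩ ⟨h₁, h₂⟩
  have honto : Onto h := by
    intro w
    obtain ⟨t, ⟨ht₁, ht₂⟩, -⟩ :=
      hlift (w ≫ pullback.fst f g) (w ≫ pullback.snd f g) (by simp [pullback.condition])
    exact ⟨t, pullback.hom_ext (by simp [h_fst, ht₁]) (by simp [h_snd, ht₂])⟩
  have := hG.isIso_of_bijective_on_elements hinj honto
  exact IsPullback.of_iso_pullback ⟨comm⟩ (asIso h) h_fst h_snd

end AxiomG

/-- In a cartesian category satisfying (G), a commutative square is a pullback iff it has the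
element-wise universal property. -/
theorem statement6 {C : Type u} [Category.{v} C]
    [HasTerminal C] [HasBinaryProducts C] [HasEqualizers C]
    (hG : AxiomG C) {P A B Z : C} (π₁ : P ⟶ A) (π₂ : P ⟶ B) (f : A ⟶ Z) (g : B ⟶ Z)
    (comm : π₁ ≫ f = π₂ ≫ g) :
    IsPullback π₁ π₂ f g ↔
      ∀ (x : ⊤_ C ⟶ A) (y : ⊤_ C ⟶ B), x ≫ f = y ≫ g →
        ∃! t : ⊤_ C ⟶ P, x = t ≫ π₁ ∧ y = t ≫ π₂ := by
  have : HasPullbacks C := hasPullbacks_of_hasBinaryProducts_of_hasEqualizers C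
  exact ⟨fun hp => hp.existsUnique_lift, hG.isPullback_of_existsUnique_lift comm⟩

end CETCS
end

section
/- (Induction) Let C be a cartesian category satisfying axiom (G) and possessing a natural numbers object 0 : 1 ⟶ N, S : N ⟶ N. Let r : R ⟶ N be a monomorphism. If 0 ∈ r and for every element n of N, n ∈ r implies S ∘ n ∈ r, then n ∈ r for every element n of N. -/
/-
Under (G) a subobject of `N` closed under `S` on elements is closed under `S` as a morphism:
pulling `r` back along `r ≫ S` gives a mono which the hypothesis makes onto, hence an iso, and
so a map `h : R ⟶ R` with `h ≫ r = r ≫ S`. Recursion from a preimage of `0` along `h` gives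
`f : N ⟶ R`, and uniqueness of recursion forces `f ≫ r = 𝟙 N`; thus `n = (n ≫ f) ≫ r`.
-/
open CategoryTheory CategoryTheory.Limits

namespace CETCS

universe v u

variable {C : Type u} [Category.{v} C] [HasTerminal C]

namespace IsNNO

variable {N : C} {z : ⊤_ C ⟶ N} {S : N ⟶ N}

theorem hom_ext (hN : IsNNO z S) {A : C} {h : A ⟶ A} {f g : N ⟶ A}
    (h0 : z ≫ f = z ≫ g) (hf : S ≫ f = f ≫ h) (hg : S ≫ g = g ≫ h) : f = g :=
  (hN (z ≫ g) h).unique ⟨h0, hf⟩ ⟨rfl, hg⟩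

theorem eq_id (hN : IsNNO z S) {f : N ⟶ N} (h0 : z ≫ f = z) (hf : S ≫ f = f ≫ S) :
    f = 𝟙 N :=
  hN.hom_ext (by rw [h0, Category.comp_id]) hf (by simp)

theorem exists_section_of_comp_eq {R : C} (hN : IsNNO z S) (r : R ⟶ N) {a₀ : ⊤_ C ⟶ R}
    (ha₀ : a₀ ≫ r = z) {h : R ⟶ R} (hh : h ≫ r = r ≫ S) : ∃ f : N ⟶ R, f ≫ r = 𝟙 N := by
  obtain ⟨f, ⟨hf0, hfS⟩, -⟩ := hN a₀ h
  refine ⟨f, hN.eq_id (by rw [← Category.assoc, hf0, ha₀]) ?_⟩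
  rw [← Category.assoc, hfS, Category.assoc, hh, Category.assoc]

end IsNNO

theorem AxiomG.exists_factor_of_forall_mem (hG : AxiomG C) {X M Y : C} (f : X ⟶ Y)
    (m : M ⟶ Y) [Mono m] [HasPullback f m] (hf : ∀ x : ⊤_ C ⟶ X, Mem m (x ≫ f)) :
    ∃ g : X ⟶ M, g ≫ m = f := by
  have honto : Onto (pullback.fst f m) := fun x ↦ by
    obtain ⟨a, ha⟩ := hf x
    exact ⟨pullback.lift x a ha.symm, pullback.lift_fst _ _ _⟩
  have := hG _ inferInstance honto
  exact ⟨inv (pullback.fst f m) ≫ pullback.snd f m, by simp [pullback.condition]⟩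

/-- (Induction) In a cartesian category satisfying (G) with an NNO, any subobject of N
containing 0 and closed under successor contains every element of N. -/
theorem statement8 {C : Type u} [Category.{v} C]
    [HasTerminal C] [HasBinaryProducts C] [HasEqualizers C]
    (hG : AxiomG C) {N : C} (z : ⊤_ C ⟶ N) (S : N ⟶ N) (hN : IsNNO z S)
    {R : C} (r : R ⟶ N) (hr : Mono r)
    (h0 : Mem r z) (hS : ∀ n : ⊤_ C ⟶ N, Mem r n → Mem r (n ≫ S)) :
    ∀ n : ⊤_ C ⟶ N, Mem r n := by
  have : HasPullbacks C := hasPullbacks_of_hasBinaryProducts_of_hasEqualizers C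
  obtain ⟨h, hh⟩ := hG.exists_factor_of_forall_mem (r ≫ S) r fun a ↦ by
    simpa only [Category.assoc] using hS (a ≫ r) ⟨a, rfl⟩
  obtain ⟨a₀, ha₀⟩ := h0
  obtain ⟨f, hf⟩ := hN.exists_section_of_comp_eq r ha₀ hh
  exact fun n ↦ ⟨n ≫ f, by rw [Category.assoc, hf, Category.comp_id]⟩

end CETCS
end

section
/- (Exponential objects) Let C be a cartesian category satisfying axioms (G) and (Π). Then for any objects X and Y there exist an object E and a total function e of two variables, given by morphisms ξ₁ : Q ⟶ E, ξ₂ : Q ⟶ X, υ : Q ⟶ Y where ξ₁, ξ₂ form a binary product diagram and (ξ₁, ξ₂, υ) are jointly monic, such that for every morphism f : X ⟶ Y there exists a unique element s of E such that for all elements x of X and y of Y: (s, x, y) ∈ (ξ₁, ξ₂, υ) if and only if f ∘ x = y. -/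
open CategoryTheory CategoryTheory.Limits

/-! Apply (Π) to `prod.fst : X ⨯ Y ⟶ X` over the terminal object. Its pullback square over `1`
exhibits `P` as a product `F × X`, and the graph of `f : X ⟶ Y`, viewed as a section of
`prod.fst`, is classified by a unique element of `F`; through `ev ≫ prod.snd` that element
evaluates to `f`. -/

namespace CETCS

universe v u

section Exponential

variable {C : Type u} [Category.{v} C]

lemma _root_.CategoryTheory.IsPullback.existsUnique_lift_of_terminal [HasTerminal C]
    {P A B : C} {fst : P ⟶ A} {snd : P ⟶ B} {f : A ⟶ ⊤_ C} {g : B ⟶ ⊤_ C}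
    (hP : IsPullback fst snd f g) {T : C} (a : T ⟶ B) (b : T ⟶ A) :
    ∃! h : T ⟶ P, h ≫ snd = a ∧ h ≫ fst = b :=
  ⟨hP.lift b a (Subsingleton.elim _ _), ⟨hP.lift_snd _ _ _, hP.lift_fst _ _ _⟩,
    fun _ ⟨ha, hb⟩ => hP.hom_ext (by rw [hb, hP.lift_fst]) (by rw [ha, hP.lift_snd])⟩

lemma _root_.CategoryTheory.IsPullback.jointlyMonic3 {P A B Z W : C} {fst : P ⟶ A}
    {snd : P ⟶ B} {f : A ⟶ Z} {g : B ⟶ Z} (hP : IsPullback fst snd f g) (r : P ⟶ W) :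
    JointlyMonic3 snd fst r :=
  fun _ _ h₁ h₂ _ => hP.hom_ext h₂ h₁

variable [HasTerminal C] [HasBinaryProducts C]

lemma mem2_graph_iff {X Y : C} (f : X ⟶ Y) (x : ⊤_ C ⟶ X) (p : ⊤_ C ⟶ X ⨯ Y) :
    Mem2 (𝟙 X) (prod.lift (𝟙 X) f) x p ↔ p = prod.lift x (x ≫ f) := by
  constructor
  · rintro ⟨a, rfl, rfl⟩
    simp only [prod.comp_lift, Category.comp_id]
  · rintro rfl
    exact ⟨x, Category.comp_id x, by simp only [prod.comp_lift, Category.comp_id]⟩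

lemma forall_mem3_graph_iff {P F X Y : C} {π₁ : P ⟶ F} {π₂ : P ⟶ X} {ev : P ⟶ X ⨯ Y}
    (hev : ev ≫ prod.fst = π₂) (f : X ⟶ Y) (s : ⊤_ C ⟶ F) :
    (∀ x p, Mem3 π₁ π₂ ev s x p ↔ p = prod.lift x (x ≫ f)) ↔
      ∀ x y, Mem3 π₁ π₂ (ev ≫ prod.snd) s x y ↔ x ≫ f = y := by
  constructor
  · intro h x y
    constructor
    · rintro ⟨a, ha₁, ha₂, rfl⟩
      rw [← Category.assoc, (h x _).mp ⟨a, ha₁, ha₂, rfl⟩, prod.lift_snd]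
    · rintro rfl
      obtain ⟨a, ha₁, ha₂, ha₃⟩ := (h x _).mpr rfl
      exact ⟨a, ha₁, ha₂, by rw [← Category.assoc, ha₃, prod.lift_snd]⟩
  · intro h x p
    constructor
    · rintro ⟨a, ha₁, ha₂, rfl⟩
      have hsnd : x ≫ f = a ≫ ev ≫ prod.snd := (h x _).mp ⟨a, ha₁, ha₂, rfl⟩
      ext
      · rw [Category.assoc, hev, ha₂, prod.lift_fst]
      · rw [Category.assoc, hsnd, prod.lift_snd]
    · rintro rfl
      obtain ⟨a, ha₁, ha₂, ha₃⟩ := (h x _).mpr rfl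
      refine ⟨a, ha₁, ha₂, ?_⟩
      ext
      · rw [Category.assoc, hev, ha₂, prod.lift_fst]
      · rw [Category.assoc, ha₃, prod.lift_snd]

end Exponential

theorem statement9_general {C : Type u} [Category.{v} C]
    [HasTerminal C] [HasBinaryProducts C]
    (hPi : AxiomPi C) (X Y : C) :
    ∃ (E Q : C) (ξ₁ : Q ⟶ E) (ξ₂ : Q ⟶ X) (υ : Q ⟶ Y),
      (∀ {T : C} (a : T ⟶ E) (b : T ⟶ X), ∃! h : T ⟶ Q, h ≫ ξ₁ = a ∧ h ≫ ξ₂ = b) ∧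
      JointlyMonic3 ξ₁ ξ₂ υ ∧
      (∀ f : X ⟶ Y, ∃! s : ⊤_ C ⟶ E,
        ∀ (x : ⊤_ C ⟶ X) (y : ⊤_ C ⟶ Y), Mem3 ξ₁ ξ₂ υ s x y ↔ x ≫ f = y) := by
  obtain ⟨P, F, ev, π₁, π₂, φ, hev, hPB, hU⟩ :=
    hPi (prod.fst : X ⨯ Y ⟶ X) (terminal.from X)
  refine ⟨F, P, π₁, π₂, ev ≫ prod.snd, hPB.existsUnique_lift_of_terminal,
    hPB.jointlyMonic3 _, fun f => ?_⟩
  have hφ (s : ⊤_ C ⟶ F) : s ≫ φ = terminal.from _ := Subsingleton.elim _ _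
  simpa only [mem2_graph_iff, forall_mem3_graph_iff hev, hφ, true_and] using
    hU (terminal.from _) (𝟙 X) (prod.lift (𝟙 X) f) inferInstance
      (fun x p hp =>
        ⟨by rw [(mem2_graph_iff f x p).mp hp, prod.lift_fst], Subsingleton.elim _ _⟩)
      (fun x _ => ⟨_, (mem2_graph_iff f x _).mpr rfl⟩)

/-- (Exponential objects) In a cartesian category satisfying (G) and (Π), for any objects X, Y
there is an object E and an evaluation total function of two variables such that every morphism
X ⟶ Y is represented by a unique element of E. -/
theorem statement9 {C : Type u} [Category.{v} C]
    [HasTerminal C] [HasBinaryProducts C] [HasEqualizers C]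
    (hG : AxiomG C) (hPi : AxiomPi C) (X Y : C) :
    ∃ (E Q : C) (ξ₁ : Q ⟶ E) (ξ₂ : Q ⟶ X) (υ : Q ⟶ Y),
      (∀ {T : C} (a : T ⟶ E) (b : T ⟶ X), ∃! h : T ⟶ Q, h ≫ ξ₁ = a ∧ h ≫ ξ₂ = b) ∧
      JointlyMonic3 ξ₁ ξ₂ υ ∧
      (∀ f : X ⟶ Y, ∃! s : ⊤_ C ⟶ E,
        ∀ (x : ⊤_ C ⟶ X) (y : ⊤_ C ⟶ Y), Mem3 ξ₁ ξ₂ υ s x y ↔ x ≫ f = y) :=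
  statement9_general hPi X Y

end CETCS
end

section
/- Let C be a cartesian category satisfying axiom (G). If a morphism f : X ⟶ Y is factored as f = i ∘ g where g : X ⟶ I is onto and i : I ⟶ Y is a monomorphism, then this is an image factorization of f: for every factorization f = j ∘ h with j : J ⟶ Y a monomorphism there exists a morphism t : I ⟶ J with i = j ∘ t. -/
/-! Pull `j` back along `i`. The projection of the pullback onto `I` is mono because `j` is, and
onto because every element of `I` is `a ≫ g` for an element `a` of `X`, which gives the element
`(a ≫ g, a ≫ h)` of the pullback. By (G) the projection is an isomorphism, and `t` is its inverse
followed by the other projection. -/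

open CategoryTheory CategoryTheory.Limits

namespace CETCS

universe v u

variable {C : Type u} [Category.{v} C] [HasTerminal C]

theorem onto_pullback_fst_of_comp_eq {X Y I J : C} {g : X ⟶ I} {h : X ⟶ J} {i : I ⟶ Y}
    {j : J ⟶ Y} [HasPullback i j] (hg : Onto g) (w : g ≫ i = h ≫ j) :
    Onto (pullback.fst i j) := by
  intro y
  obtain ⟨a, rfl⟩ := hg y
  exact ⟨pullback.lift (a ≫ g) (a ≫ h) (by simp [w]), pullback.lift_fst _ _ _⟩

theorem exists_factor_of_onto_comp_eq (hG : AxiomG C) {X Y I J : C} {g : X ⟶ I} {h : X ⟶ J}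
    {i : I ⟶ Y} {j : J ⟶ Y} [Mono j] [HasPullback i j] (hg : Onto g) (w : g ≫ i = h ≫ j) :
    ∃ t : I ⟶ J, i = t ≫ j := by
  have := hG (pullback.fst i j) inferInstance (onto_pullback_fst_of_comp_eq hg w)
  exact ⟨inv (pullback.fst i j) ≫ pullback.snd i j, by simp [pullback.condition]⟩

theorem statement12_general {C : Type u} [Category.{v} C]
    [HasTerminal C] [HasBinaryProducts C] [HasEqualizers C]
    (hG : AxiomG C) {X Y I : C} (f : X ⟶ Y) (g : X ⟶ I) (i : I ⟶ Y)
    (hg : Onto g) (hfac : g ≫ i = f) :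
    ∀ {J : C} (h : X ⟶ J) (j : J ⟶ Y), Mono j → h ≫ j = f →
      ∃ t : I ⟶ J, i = t ≫ j := by
  intro J h j _ hhj
  have : HasFiniteProducts C := hasFiniteProducts_of_has_binary_and_terminal
  have : HasFiniteLimits C := hasFiniteLimits_of_hasEqualizers_and_finite_products
  exact exists_factor_of_onto_comp_eq hG hg (hfac.trans hhj.symm)

/-- In a cartesian category satisfying (G), a factorization of f as an onto morphism followed by
a mono is an image factorization. -/
theorem statement12 {C : Type u} [Category.{v} C]
    [HasTerminal C] [HasBinaryProducts C] [HasEqualizers C]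
    (hG : AxiomG C) {X Y I : C} (f : X ⟶ Y) (g : X ⟶ I) (i : I ⟶ Y)
    (hg : Onto g) (hi : Mono i) (hfac : g ≫ i = f) :
    ∀ {J : C} (h : X ⟶ J) (j : J ⟶ Y), Mono j → h ≫ j = f →
      ∃ t : I ⟶ J, i = t ≫ j :=
  statement12_general hG f g i hg hfac

end CETCS
end

section
/- Let C be a cartesian category satisfying axiom (G). Then (a) every onto morphism of C is a cover; and (b) if C additionally satisfies axiom (Fct), then every cover of C is onto. -/
open CategoryTheory CategoryTheory.Limits

namespace CETCS

universe v u

variable {C : Type u} [Category.{v} C] [HasTerminal C]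

section Onto

variable {A B D : C}

theorem Onto.of_isIso (f : A ⟶ B) [IsIso f] : Onto f :=
  fun y => ⟨y ≫ inv f, by simp⟩

theorem Onto.comp {f : A ⟶ B} {g : B ⟶ D} (hf : Onto f) (hg : Onto g) : Onto (f ≫ g) := by
  intro z
  obtain ⟨y, rfl⟩ := hg z
  obtain ⟨x, rfl⟩ := hf y
  exact ⟨x, (Category.assoc _ _ _).symm⟩

theorem Onto.of_comp {f : A ⟶ B} {g : B ⟶ D} (h : Onto (f ≫ g)) : Onto g := by
  intro z
  obtain ⟨x, rfl⟩ := h z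
  exact ⟨x ≫ f, Category.assoc _ _ _⟩

theorem IsCover.of_onto (hG : AxiomG C) {f : A ⟶ B} (hf : Onto f) : IsCover f := by
  rintro I g m hm rfl
  exact hG m hm hf.of_comp

theorem IsCover.onto (hFct : AxiomFct C) {f : A ⟶ B} (hf : IsCover f) : Onto f := by
  obtain ⟨I, e, i, he, hi, rfl⟩ := hFct f
  have : IsIso i := hf e i hi rfl
  exact he.comp (Onto.of_isIso i)

end Onto

theorem statement13_general {C : Type u} [Category.{v} C]
    [HasTerminal C]
    (hG : AxiomG C) :
    (∀ {A B : C} (f : A ⟶ B), Onto f → IsCover f) ∧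
    (AxiomFct C → ∀ {A B : C} (f : A ⟶ B), IsCover f → Onto f) :=
  ⟨fun _ hf => IsCover.of_onto hG hf, fun hFct _ _ _ hf => hf.onto hFct⟩

/-- In a cartesian category satisfying (G): (a) every onto morphism is a cover;
(b) if in addition (Fct) holds, every cover is onto. -/
theorem statement13 {C : Type u} [Category.{v} C]
    [HasTerminal C] [HasBinaryProducts C] [HasEqualizers C]
    (hG : AxiomG C) :
    (∀ {A B : C} (f : A ⟶ B), Onto f → IsCover f) ∧
    (AxiomFct C → ∀ {A B : C} (f : A ⟶ B), IsCover f → Onto f) :=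
  statement13_general hG

end CETCS
end

section
/- Let C be a cartesian category satisfying axiom (G). Then C satisfies axiom (Fct) if and only if C is a regular category in which the terminal object 1 is projective. -/
open CategoryTheory CategoryTheory.Limits

namespace CETCS

universe v u

variable {C : Type u} [Category.{v} C] [HasTerminal C]

/-!
Under (G) every onto morphism is a cover, and under (Fct) every cover is onto, since the mono
part of its (onto, mono) factorization must be an isomorphism. So (Fct) makes covers and onto
morphisms coincide, and onto morphisms are evidently pullback-stable and lift global elements.
-/

theorem isCover_of_onto (hG : AxiomG C) {A B : C} {f : A ⟶ B} (hf : Onto f) : IsCover f := by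
  intro I g m hm hgm
  refine hG m hm fun y => ?_
  obtain ⟨x, rfl⟩ := hf y
  exact ⟨x ≫ g, by rw [Category.assoc, hgm]⟩

theorem onto_of_isCover (hFct : AxiomFct C) {A B : C} {f : A ⟶ B} (hf : IsCover f) :
    Onto f := by
  intro y
  obtain ⟨I, e, i, he, hi, rfl⟩ := hFct f
  have : IsIso i := hf e i hi rfl
  obtain ⟨x, hx⟩ := he (y ≫ inv i)
  exact ⟨x, by rw [← Category.assoc, hx, Category.assoc, IsIso.inv_hom_id, Category.comp_id]⟩

theorem onto_of_isPullback {P A B Z : C} {p : P ⟶ A} {q : P ⟶ B} {f : A ⟶ Z} {g : B ⟶ Z}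
    (hpb : IsPullback p q f g) (hf : Onto f) : Onto q := by
  intro b
  obtain ⟨a, ha⟩ := hf (b ≫ g)
  exact ⟨hpb.lift a b ha, hpb.lift_snd a b ha⟩

theorem hasCoverMonoFactorizations_of_axiomFct (hG : AxiomG C) (hFct : AxiomFct C) :
    HasCoverMonoFactorizations C := by
  intro A B f
  obtain ⟨I, e, i, he, hi, hei⟩ := hFct f
  exact ⟨I, e, i, isCover_of_onto hG he, hi, hei⟩

theorem coversPullbackStable_of_axiomFct (hG : AxiomG C) (hFct : AxiomFct C) :
    CoversPullbackStable C := fun _ _ _ _ hpb hf =>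
  isCover_of_onto hG (onto_of_isPullback hpb (onto_of_isCover hFct hf))

theorem terminalProjective_of_axiomFct (hFct : AxiomFct C) : TerminalProjective C :=
  fun _ he => onto_of_isCover hFct he

theorem axiomFct_of_hasCoverMonoFactorizations (hFac : HasCoverMonoFactorizations C)
    (hProj : TerminalProjective C) : AxiomFct C := by
  intro A B f
  obtain ⟨I, e, m, he, hm, hem⟩ := hFac f
  exact ⟨I, e, m, hProj e he, hm, hem⟩

theorem statement14_general {C : Type u} [Category.{v} C]
    [HasTerminal C]
    (hG : AxiomG C) :
    AxiomFct C ↔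
      (HasCoverMonoFactorizations C ∧ CoversPullbackStable C ∧ TerminalProjective C) :=
  ⟨fun hFct => ⟨hasCoverMonoFactorizations_of_axiomFct hG hFct,
      coversPullbackStable_of_axiomFct hG hFct, terminalProjective_of_axiomFct hFct⟩,
    fun ⟨hFac, _, hProj⟩ => axiomFct_of_hasCoverMonoFactorizations hFac hProj⟩

/-- In a cartesian category satisfying (G), (Fct) holds iff the category is regular (has
cover-mono factorizations and covers are stable under pullback) and the terminal object is
projective. -/
theorem statement14 {C : Type u} [Category.{v} C]
    [HasTerminal C] [HasBinaryProducts C] [HasEqualizers C]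
    (hG : AxiomG C) :
    AxiomFct C ↔
      (HasCoverMonoFactorizations C ∧ CoversPullbackStable C ∧ TerminalProjective C) :=
  statement14_general hG

end CETCS
end

section
/- Let C be a cartesian category with binary coproducts satisfying axioms (G), (Fct) and (DP). For any monomorphisms r : R ⟶ X and s : S ⟶ X there exists a monomorphism t : T ⟶ X such that for every element x of X: x ∈ t if and only if (x ∈ r or x ∈ s). -/
open CategoryTheory CategoryTheory.Limits

namespace CETCS

universe v u

variable {C : Type u} [Category.{v} C] [HasTerminal C]

/-! The union is the image of `[r, s] : R ⨿ S ⟶ X` in the (onto, mono) factorization given by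
(Fct): an element in the image lifts to `R ⨿ S` because the first factor is onto, and by (DP) the
lift comes from `R` or from `S`. -/

theorem Mem.of_comp {A M X : C} {e : A ⟶ M} {m : M ⟶ X} {x : ⊤_ C ⟶ X}
    (h : Mem (e ≫ m) x) : Mem m x :=
  let ⟨a, ha⟩ := h
  ⟨a ≫ e, by rwa [Category.assoc]⟩

theorem mem_comp_iff_of_onto {A M X : C} {e : A ⟶ M} (he : Onto e) (m : M ⟶ X)
    (x : ⊤_ C ⟶ X) : Mem (e ≫ m) x ↔ Mem m x := by
  refine ⟨Mem.of_comp, fun ⟨a, ha⟩ => ?_⟩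
  obtain ⟨b, rfl⟩ := he a
  exact ⟨b, by rwa [← Category.assoc]⟩

theorem isCoproductDiagram_coprod {D : Type u} [Category.{v} D] (A B : D)
    [HasBinaryCoproduct A B] : IsCoproductDiagram (coprod.inl : A ⟶ A ⨿ B) coprod.inr :=
  fun f g => ⟨coprod.desc f g, ⟨coprod.inl_desc f g, coprod.inr_desc f g⟩,
    fun _ ⟨hl, hr⟩ => coprod.hom_ext (hl.trans (coprod.inl_desc f g).symm)
      (hr.trans (coprod.inr_desc f g).symm)⟩

theorem mem_coprod_desc_iff (hDP : AxiomDP C) {R S X : C} [HasBinaryCoproduct R S]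
    (r : R ⟶ X) (s : S ⟶ X) (x : ⊤_ C ⟶ X) :
    Mem (coprod.desc r s) x ↔ Mem r x ∨ Mem s x := by
  constructor
  · rintro ⟨a, rfl⟩
    rcases hDP _ _ (isCoproductDiagram_coprod R S) a with ⟨c, rfl⟩ | ⟨c, rfl⟩
    · exact Or.inl ⟨c, by rw [Category.assoc, coprod.inl_desc]⟩
    · exact Or.inr ⟨c, by rw [Category.assoc, coprod.inr_desc]⟩
  · rintro (h | h)
    · exact Mem.of_comp (e := coprod.inl) (by rwa [coprod.inl_desc])
    · exact Mem.of_comp (e := coprod.inr) (by rwa [coprod.inr_desc])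

theorem statement15_general {C : Type u} [Category.{v} C]
    [HasTerminal C] [HasBinaryCoproducts C]
    (hFct : AxiomFct C) (hDP : AxiomDP C)
    {R S X : C} (r : R ⟶ X) (s : S ⟶ X) :
    ∃ (T : C) (t : T ⟶ X), Mono t ∧
      ∀ x : ⊤_ C ⟶ X, (Mem t x ↔ (Mem r x ∨ Mem s x)) := by
  obtain ⟨T, e, t, he, ht, hfac⟩ := hFct (coprod.desc r s)
  refine ⟨T, t, ht, fun x => ?_⟩
  rw [← mem_comp_iff_of_onto he, hfac, mem_coprod_desc_iff hDP]

/-- (Disjunction of subobjects) In a cartesian category with binary coproducts satisfying (G),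
(Fct) and (DP), any two subobjects of X have a union. -/
theorem statement15 {C : Type u} [Category.{v} C]
    [HasTerminal C] [HasBinaryProducts C] [HasEqualizers C] [HasBinaryCoproducts C]
    (hG : AxiomG C) (hFct : AxiomFct C) (hDP : AxiomDP C)
    {R S X : C} (r : R ⟶ X) (s : S ⟶ X) (hr : Mono r) (hs : Mono s) :
    ∃ (T : C) (t : T ⟶ X), Mono t ∧
      ∀ x : ⊤_ C ⟶ X, (Mem t x ↔ (Mem r x ∨ Mem s x)) :=
  statement15_general hFct hDP r s

end CETCS
end

section
/- Let C be a cartesian category satisfying axioms (G) and (Π). For any monomorphisms r : R ⟶ X and s : S ⟶ X there exists a monomorphism t : T ⟶ X such that for every element x of X: x ∈ t if and only if (x ∈ r implies x ∈ s). -/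
/-!
Pull `s` back along `r` to a mono `u : Q ⟶ R` and apply (Π) to `u` and `r`, getting
`φ : F ⟶ X`. An element `x` is a member of `φ` exactly when every element of `R` over `x` lifts
to `Q`, i.e. when `x ∈ r → x ∈ s`. Moreover the element of `F` over such an `x` is unique, being
the one (Π) attaches to the fibre of `u ≫ r` over `x`; so `φ` is injective on elements, and (G),
applied to its diagonal, makes it mono.
-/

open CategoryTheory CategoryTheory.Limits

namespace CETCS

universe v u

variable {C : Type u} [Category.{v} C] [HasTerminal C]

/-- The diagonal of such a morphism is onto, hence invertible by (G). -/
lemma mono_of_injective_on_elements_s16 (hG : AxiomG C) {F X : C} (φ : F ⟶ X) [HasPullback φ φ]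
    (hφ : ∀ s₁ s₂ : ⊤_ C ⟶ F, s₁ ≫ φ = s₂ ≫ φ → s₁ = s₂) : Mono φ := by
  have onto : Onto (pullback.diagonal φ) := by
    intro z
    have hz : z ≫ pullback.fst φ φ = z ≫ pullback.snd φ φ :=
      hφ _ _ (by rw [Category.assoc, Category.assoc, pullback.condition])
    refine ⟨z ≫ pullback.fst φ φ, pullback.hom_ext ?_ ?_⟩
    · simp
    · simp [hz]
  exact (pullback.isIso_diagonal_iff φ).mp (hG _ inferInstance onto)

lemma forall_lift_pullback_fst_iff [HasPullbacks C] {R S X : C} (r : R ⟶ X) (s : S ⟶ X)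
    (x : ⊤_ C ⟶ X) :
    (∀ a : ⊤_ C ⟶ R, a ≫ r = x → ∃ q, q ≫ pullback.fst r s = a) ↔ (Mem r x → Mem s x) := by
  constructor
  · rintro h ⟨a, rfl⟩
    obtain ⟨q, rfl⟩ := h a rfl
    exact ⟨q ≫ pullback.snd r s, by simp [pullback.condition]⟩
  · rintro h a rfl
    obtain ⟨b, hb⟩ := h ⟨a, rfl⟩
    exact ⟨pullback.lift a b hb.symm, pullback.lift_fst _ _ _⟩

lemma mem2_fiber_iff [HasPullbacks C] {Y X I : C} (g : Y ⟶ X) (f : X ⟶ I) (i : ⊤_ C ⟶ I)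
    (x : ⊤_ C ⟶ X) (y : ⊤_ C ⟶ Y) :
    Mem2 (pullback.fst (g ≫ f) i ≫ g) (pullback.fst (g ≫ f) i) x y ↔ y ≫ g = x ∧ x ≫ f = i := by
  constructor
  · rintro ⟨a, rfl, rfl⟩
    refine ⟨Category.assoc _ _ _, ?_⟩
    simp only [Category.assoc]
    rw [pullback.condition, ← Category.assoc, terminal.hom_ext (a ≫ _) (𝟙 _), Category.id_comp]
  · rintro ⟨rfl, hx⟩
    refine ⟨pullback.lift y (terminal.from _) ?_, ?_, pullback.lift_fst _ _ _⟩
    · rw [terminal.hom_ext (terminal.from _) (𝟙 _), Category.id_comp, ← Category.assoc, hx]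
    · rw [← Category.assoc, pullback.lift_fst]

/-- What axiom (Π) asserts of the diagram `ev, π₁, π₂, φ` it provides for `g` and `f`. -/
structure IsElementwisePi {Y X I P F : C} (g : Y ⟶ X) (f : X ⟶ I)
    (ev : P ⟶ Y) (π₁ : P ⟶ F) (π₂ : P ⟶ X) (φ : F ⟶ I) : Prop where
  ev_comp : ev ≫ g = π₂
  isPullback : IsPullback π₂ π₁ f φ
  existsUnique : ∀ (i : ⊤_ C ⟶ I) {R : C} (r₁ : R ⟶ X) (r₂ : R ⟶ Y), Mono r₁ →
      (∀ (x : ⊤_ C ⟶ X) (y : ⊤_ C ⟶ Y), Mem2 r₁ r₂ x y → y ≫ g = x ∧ x ≫ f = i) →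
      (∀ x : ⊤_ C ⟶ X, x ≫ f = i → ∃ y : ⊤_ C ⟶ Y, Mem2 r₁ r₂ x y) →
      ∃! s : ⊤_ C ⟶ F, s ≫ φ = i ∧
        ∀ (x : ⊤_ C ⟶ X) (y : ⊤_ C ⟶ Y), Mem3 π₁ π₂ ev s x y ↔ Mem2 r₁ r₂ x y

namespace IsElementwisePi

variable {Y X I P F : C} {g : Y ⟶ X} {f : X ⟶ I}
  {ev : P ⟶ Y} {π₁ : P ⟶ F} {π₂ : P ⟶ X} {φ : F ⟶ I}

lemma exists_lift (hpi : IsElementwisePi g f ev π₁ π₂ φ) {s : ⊤_ C ⟶ F} {x : ⊤_ C ⟶ X}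
    (hx : x ≫ f = s ≫ φ) : ∃ y, y ≫ g = x :=
  ⟨hpi.isPullback.lift x s hx ≫ ev, by rw [Category.assoc, hpi.ev_comp, hpi.isPullback.lift_fst]⟩

lemma mem3_iff [Mono g] (hpi : IsElementwisePi g f ev π₁ π₂ φ) (s : ⊤_ C ⟶ F)
    (x : ⊤_ C ⟶ X) (y : ⊤_ C ⟶ Y) :
    Mem3 π₁ π₂ ev s x y ↔ y ≫ g = x ∧ x ≫ f = s ≫ φ := by
  constructor
  · rintro ⟨p, rfl, rfl, rfl⟩
    exact ⟨by rw [Category.assoc, hpi.ev_comp],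
      by rw [Category.assoc, hpi.isPullback.w, Category.assoc]⟩
  · rintro ⟨rfl, hx⟩
    refine ⟨hpi.isPullback.lift _ s hx, hpi.isPullback.lift_snd _ _ _,
      hpi.isPullback.lift_fst _ _ _, ?_⟩
    rw [← cancel_mono g, Category.assoc, hpi.ev_comp, hpi.isPullback.lift_fst]

lemma existsUnique_of_forall_lift [Mono g] [HasPullbacks C]
    (hpi : IsElementwisePi g f ev π₁ π₂ φ) (i : ⊤_ C ⟶ I)
    (hlift : ∀ x : ⊤_ C ⟶ X, x ≫ f = i → ∃ y, y ≫ g = x) : ∃! s, s ≫ φ = i := by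
  -- apply (Π) to the fibre of `g ≫ f` over `i`; by `mem3_iff` every `s` over `i` represents it
  have : Mono i := terminalIsTerminal.mono_from i
  obtain ⟨s, ⟨hs, -⟩, huniq⟩ := hpi.existsUnique i _ (pullback.fst (g ≫ f) i)
    inferInstance (fun x y h => (mem2_fiber_iff g f i x y).mp h)
    (fun x hx => (hlift x hx).imp fun y hy => (mem2_fiber_iff g f i x y).mpr ⟨hy, hx⟩)
  refine ⟨s, hs, fun s' hs' => huniq s' ⟨hs', fun x y => ?_⟩⟩
  rw [hpi.mem3_iff, mem2_fiber_iff, hs']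

lemma mem_iff [Mono g] [HasPullbacks C] (hpi : IsElementwisePi g f ev π₁ π₂ φ)
    (i : ⊤_ C ⟶ I) : Mem φ i ↔ ∀ x : ⊤_ C ⟶ X, x ≫ f = i → ∃ y, y ≫ g = x := by
  constructor
  · rintro ⟨s, rfl⟩ x hx
    exact hpi.exists_lift hx
  · intro hlift
    exact (hpi.existsUnique_of_forall_lift i hlift).exists

lemma mono [Mono g] [HasPullbacks C] (hG : AxiomG C) (hpi : IsElementwisePi g f ev π₁ π₂ φ) :
    Mono φ :=
  mono_of_injective_on_elements_s16 hG φ fun _ _ h =>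
    (hpi.existsUnique_of_forall_lift _ fun _ hx => hpi.exists_lift hx).unique rfl h.symm

end IsElementwisePi

theorem statement16_general {C : Type u} [Category.{v} C]
    [HasTerminal C] [HasBinaryProducts C] [HasEqualizers C]
    (hG : AxiomG C) (hPi : AxiomPi C)
    {R S X : C} (r : R ⟶ X) (s : S ⟶ X) (hs : Mono s) :
    ∃ (T : C) (t : T ⟶ X), Mono t ∧
      ∀ x : ⊤_ C ⟶ X, (Mem t x ↔ (Mem r x → Mem s x)) := by
  have : HasPullbacks C := hasPullbacks_of_hasBinaryProducts_of_hasEqualizers C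
  obtain ⟨P, F, ev, π₁, π₂, φ, hev, hpb, huniv⟩ := hPi (pullback.fst r s) r
  have hpi : IsElementwisePi (pullback.fst r s) r ev π₁ π₂ φ := ⟨hev, hpb, huniv⟩
  refine ⟨F, φ, hpi.mono hG, fun x => ?_⟩
  rw [hpi.mem_iff, forall_lift_pullback_fst_iff]

/-- (Implication of subobjects) In a cartesian category satisfying (G) and (Π), for any two
subobjects r, s of X there is a subobject whose members are exactly the elements x with
x ∈ r → x ∈ s. -/
theorem statement16 {C : Type u} [Category.{v} C]
    [HasTerminal C] [HasBinaryProducts C] [HasEqualizers C]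
    (hG : AxiomG C) (hPi : AxiomPi C)
    {R S X : C} (r : R ⟶ X) (s : S ⟶ X) (hr : Mono r) (hs : Mono s) :
    ∃ (T : C) (t : T ⟶ X), Mono t ∧
      ∀ x : ⊤_ C ⟶ X, (Mem t x ↔ (Mem r x → Mem s x)) :=
  statement16_general hG hPi r s hs

end CETCS
end
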